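/- arXiv:2108.10011 — 5 statements merged into one kernel-verified Lean document; each statement's English description precedes it below -/
import Mathlib

section
/- For a composition μ of n, let s_μ = min{ m : C^μ_m > 0 } (this set is nonempty since taking all t_i = 0 gives a walk with n defects). Then s_{(n)} = n, and for μ = (μ_1, …, μ_r) with r ≥ 2, writing μ̂ = (μ_1, …, μ_{r−1}) and |μ̂| = μ_1 + ⋯ + μ_{r−1}: s_μ = s_{μ̂} − μ_r if μ_r ≤ s_{μ̂}; s_μ = (s_{μ̂} − μ_r) mod 2 if s_{μ̂} < μ_r < |μ̂|; and s_μ = μ_r − |μ̂| if μ_r ≥ |μ̂|. -/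
/-- `t` is a walk over the composition `μ` with `m` defects: `0 ≤ t i ≤ μ i`,
every partial sum `∑_{i<j} (μ i − 2 t i)` is at least `t j`, and the total
`∑ i (μ i − 2 t i)` equals `m`. -/
def IsWalk {r : ℕ} (μ : Fin r → ℕ) (m : ℕ) (t : Fin r → ℕ) : Prop :=
  (∀ i, t i ≤ μ i) ∧
  (∀ j : Fin r, (t j : ℤ) ≤
      ∑ i ∈ Finset.univ.filter (fun i : Fin r => i < j), ((μ i : ℤ) - 2 * (t i : ℤ))) ∧
  (∑ i : Fin r, ((μ i : ℤ) - 2 * (t i : ℤ))) = (m : ℤ)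

/-- `C^μ_m`: the number of walks over `μ` with `m` defects. -/
noncomputable def walkCount {r : ℕ} (μ : Fin r → ℕ) (m : ℕ) : ℕ :=
  Nat.card { t : Fin r → ℕ // IsWalk μ m t }

/-- `s_μ`: the minimal number of defects of a walk over `μ`. -/
noncomputable def minDefects {r : ℕ} (μ : Fin r → ℕ) : ℕ :=
  sInf { m : ℕ | 0 < walkCount μ m }

/-!
Lowering one positive `t i` by one keeps a walk a walk and adds two defects, while every
defect number has the parity of `n`; so the defect numbers over `μ̂` are exactly
`s_{μ̂}, s_{μ̂} + 2, …, |μ̂|`. A walk over `μ` is a walk over `μ̂` with `m̂` defects followed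
by a last step `t_r = k ≤ min (μ_r, m̂)`, which leaves `m̂ + μ_r − 2k` defects; hence `s_μ`
is the distance from `μ_r` to that progression.
-/

open Finset

def walkDefects {r : ℕ} (μ : Fin r → ℕ) : Set ℕ :=
  {m | ∃ t, IsWalk μ m t}

theorem exists_le_sum_add_one {ι : Type*} [Fintype ι] [DecidableEq ι] {t : ι → ℕ}
    (ht : 0 < ∑ i, t i) : ∃ t' ≤ t, ∑ i, t' i + 1 = ∑ i, t i := by
  obtain ⟨i₀, -, hi₀⟩ := exists_ne_zero_of_sum_ne_zero ht.ne'
  refine ⟨Function.update t i₀ (t i₀ - 1), fun i => ?_, ?_⟩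
  · rcases eq_or_ne i i₀ with rfl | hne <;> simp [*]
  · rw [sum_update_of_mem (mem_univ i₀), sum_eq_add_sum_sdiff_singleton_of_mem (mem_univ i₀)]
    omega

section Walks

variable {r : ℕ} {μ : Fin r → ℕ} {m : ℕ} {t : Fin r → ℕ}

theorem IsWalk.add_two_mul_sum_eq (h : IsWalk μ m t) : m + 2 * ∑ i, t i = ∑ i, μ i := by
  have htot := h.2.2
  rw [sum_sub_distrib, ← mul_sum] at htot
  zify
  linarith

theorem isWalk_zero (μ : Fin r → ℕ) : IsWalk μ (∑ i, μ i) 0 :=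
  ⟨fun _ => Nat.zero_le _, fun _ => by simpa using sum_nonneg fun i _ => (μ i).cast_nonneg,
    by simp⟩

theorem IsWalk.of_le (h : IsWalk μ m t) {t' : Fin r → ℕ} {d : ℕ} (hle : t' ≤ t)
    (hsum : ∑ i, t' i + d = ∑ i, t i) : IsWalk μ (m + 2 * d) t' := by
  have hstep : ∀ i, (μ i : ℤ) - 2 * t i ≤ μ i - 2 * t' i := fun i => by
    have : t' i ≤ t i := hle i
    omega
  refine ⟨fun i => (hle i).trans (h.1 i), fun j => ?_, ?_⟩
  · calc (t' j : ℤ) ≤ t j := by exact_mod_cast hle j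
      _ ≤ _ := h.2.1 j
      _ ≤ _ := sum_le_sum fun i _ => hstep i
  · have htot := h.2.2
    rw [sum_sub_distrib, ← mul_sum] at htot ⊢
    have : ∑ i, (t' i : ℤ) + d = ∑ i, (t i : ℤ) := by exact_mod_cast hsum
    push_cast
    linarith

end Walks

section Defects

variable {r : ℕ} {μ : Fin r → ℕ} {m : ℕ}

theorem finite_isWalk (μ : Fin r → ℕ) (m : ℕ) : Finite {t // IsWalk μ m t} :=
  ((Set.finite_Iic μ).subset fun _ ht => ht.1).to_subtype

theorem minDefects_eq_sInf (μ : Fin r → ℕ) : minDefects μ = sInf (walkDefects μ) := by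
  unfold minDefects walkCount walkDefects
  congr 1
  ext m
  have := finite_isWalk μ m
  simp only [Set.mem_ofPred_eq, Nat.card_pos_iff, nonempty_subtype]
  exact and_iff_left this

theorem minDefects_mem_walkDefects (μ : Fin r → ℕ) : minDefects μ ∈ walkDefects μ := by
  rw [minDefects_eq_sInf]
  exact Nat.sInf_mem ⟨_, 0, isWalk_zero μ⟩

theorem minDefects_le (hm : m ∈ walkDefects μ) : minDefects μ ≤ m := by
  rw [minDefects_eq_sInf]
  exact Nat.sInf_le hm

theorem minDefects_eq_of_isLeast (h : IsLeast (walkDefects μ) m) : minDefects μ = m := by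
  rw [minDefects_eq_sInf]
  exact h.csInf_eq

theorem add_two_mem_walkDefects (hm : m ∈ walkDefects μ) (h : m + 2 ≤ ∑ i, μ i) :
    m + 2 ∈ walkDefects μ := by
  obtain ⟨t, ht⟩ := hm
  have := ht.add_two_mul_sum_eq
  obtain ⟨t', hle, hsum⟩ := exists_le_sum_add_one (t := t) (by omega)
  exact ⟨t', by simpa using ht.of_le hle hsum⟩

theorem mem_walkDefects_iff :
    m ∈ walkDefects μ ↔ minDefects μ ≤ m ∧ ∃ c, m + 2 * c = ∑ i, μ i := by
  refine ⟨fun ⟨t, ht⟩ => ⟨minDefects_le ⟨t, ht⟩, _, ht.add_two_mul_sum_eq⟩, ?_⟩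
  rintro ⟨hle, c, hc⟩
  have hfill : ∀ j, minDefects μ + 2 * j ≤ ∑ i, μ i → minDefects μ + 2 * j ∈ walkDefects μ := by
    intro j
    induction j with
    | zero => exact fun _ => minDefects_mem_walkDefects μ
    | succ j ih => exact fun hj => add_two_mem_walkDefects (ih (by omega)) (by omega)
  obtain ⟨t, ht⟩ := minDefects_mem_walkDefects μ
  have := ht.add_two_mul_sum_eq
  obtain rfl : m = minDefects μ + 2 * (∑ i, t i - c) := by omega
  exact hfill _ (by omega)

end Defects

theorem sum_filter_lt_castSucc {r : ℕ} (f : Fin (r + 1) → ℤ) (j : Fin r) :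
    ∑ i ∈ univ.filter (fun i : Fin (r + 1) => i < j.castSucc), f i =
      ∑ i ∈ univ.filter (fun i : Fin r => i < j), f i.castSucc := by
  rw [filter_gt_eq_Iio, filter_gt_eq_Iio, Fin.Iio_castSucc, sum_map]
  rfl

theorem sum_filter_lt_last {r : ℕ} (f : Fin (r + 1) → ℤ) :
    ∑ i ∈ univ.filter (fun i : Fin (r + 1) => i < Fin.last r), f i =
      ∑ i : Fin r, f i.castSucc := by
  rw [filter_gt_eq_Iio, Fin.Iio_last_eq_map, sum_map]
  rfl

section Last

variable {r : ℕ} (μ : Fin (r + 1) → ℕ)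

theorem isWalk_snoc_iff {m k : ℕ} {t : Fin r → ℕ} :
    IsWalk μ m (Fin.snoc t k : Fin (r + 1) → ℕ) ↔
      ∃ mh, IsWalk (μ ∘ Fin.castSucc) mh t ∧ k ≤ μ (Fin.last r) ∧ k ≤ mh ∧
        m + 2 * k = mh + μ (Fin.last r) := by
  simp only [IsWalk, Fin.forall_fin_succ', Fin.sum_univ_castSucc, sum_filter_lt_castSucc,
    sum_filter_lt_last, Fin.snoc_castSucc, Fin.snoc_last, Function.comp_apply]
  constructor
  · rintro ⟨⟨hle, hk⟩, ⟨hprefix, hkh⟩, htot⟩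
    exact ⟨(∑ i : Fin r, ((μ i.castSucc : ℤ) - 2 * t i)).toNat, ⟨hle, hprefix, by omega⟩, hk,
      by omega, by omega⟩
  · rintro ⟨mh, ⟨hle, hprefix, htot⟩, hk, hkh, hm⟩
    exact ⟨⟨hle, hk⟩, ⟨hprefix, by omega⟩, by omega⟩

theorem mem_walkDefects_iff_exists_init {m : ℕ} :
    m ∈ walkDefects μ ↔ ∃ mh ∈ walkDefects (μ ∘ Fin.castSucc), ∃ k ≤ μ (Fin.last r),
      k ≤ mh ∧ m + 2 * k = mh + μ (Fin.last r) := by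
  constructor
  · rintro ⟨t, ht⟩
    rw [← Fin.snoc_init_self t, isWalk_snoc_iff] at ht
    obtain ⟨mh, hw, hk, hkh, hm⟩ := ht
    exact ⟨mh, ⟨_, hw⟩, _, hk, hkh, hm⟩
  · rintro ⟨mh, ⟨t, ht⟩, k, hk, hkh, hm⟩
    exact ⟨Fin.snoc t k, (isWalk_snoc_iff μ).2 ⟨mh, ht, hk, hkh, hm⟩⟩

theorem minDefects_of_last_le (h : μ (Fin.last r) ≤ minDefects (μ ∘ Fin.castSucc)) :
    minDefects μ = minDefects (μ ∘ Fin.castSucc) - μ (Fin.last r) := by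
  refine minDefects_eq_of_isLeast ⟨(mem_walkDefects_iff_exists_init μ).2
    ⟨_, minDefects_mem_walkDefects _, _, le_rfl, h, by omega⟩, fun m hm => ?_⟩
  obtain ⟨mh, hmh, k, hk, -, hm⟩ := (mem_walkDefects_iff_exists_init μ).1 hm
  have := minDefects_le hmh
  omega

theorem minDefects_of_lt_last_of_last_lt_sum
    (h₁ : minDefects (μ ∘ Fin.castSucc) < μ (Fin.last r))
    (h₂ : μ (Fin.last r) < ∑ i : Fin r, μ (Fin.castSucc i)) :
    (minDefects μ : ℤ) = ((minDefects (μ ∘ Fin.castSucc) : ℤ) - (μ (Fin.last r) : ℤ)) % 2 := by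
  obtain ⟨c₀, hc₀⟩ := (mem_walkDefects_iff.1 (minDefects_mem_walkDefects (μ ∘ Fin.castSucc))).2
  simp only [Function.comp_apply] at hc₀
  set s := minDefects (μ ∘ Fin.castSucc)
  set L := μ (Fin.last r)
  set N := ∑ i : Fin r, μ i.castSucc
  have hwit : L + (L - s) % 2 ∈ walkDefects (μ ∘ Fin.castSucc) :=
    mem_walkDefects_iff.2
      ⟨by omega, (N - L - (L - s) % 2) / 2, by simp only [Function.comp_apply]; omega⟩
  have : minDefects μ = (L - s) % 2 := by
    refine minDefects_eq_of_isLeast ⟨(mem_walkDefects_iff_exists_init μ).2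
      ⟨_, hwit, _, le_rfl, by omega, by omega⟩, fun m hm => ?_⟩
    obtain ⟨mh, hmh, k, -, -, hm⟩ := (mem_walkDefects_iff_exists_init μ).1 hm
    obtain ⟨-, c, hc⟩ := mem_walkDefects_iff.1 hmh
    simp only [Function.comp_apply] at hc
    omega
  omega

theorem minDefects_of_sum_le_last (h : ∑ i : Fin r, μ (Fin.castSucc i) ≤ μ (Fin.last r)) :
    minDefects μ = μ (Fin.last r) - ∑ i : Fin r, μ (Fin.castSucc i) := by
  refine minDefects_eq_of_isLeast ⟨(mem_walkDefects_iff_exists_init μ).2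
    ⟨_, ⟨0, isWalk_zero _⟩, _, h, le_rfl, by simp only [Function.comp_apply]; omega⟩,
    fun m hm => ?_⟩
  obtain ⟨mh, hmh, k, -, hkh, hm⟩ := (mem_walkDefects_iff_exists_init μ).1 hm
  obtain ⟨-, c, hc⟩ := mem_walkDefects_iff.1 hmh
  simp only [Function.comp_apply] at hc
  omega

end Last

/-- Recursion for the minimal defect number `s_μ`: `s_{(n)} = n`, and removing
the last part `μ_r` (with `μ̂` the truncated composition):
`s_μ = s_{μ̂} − μ_r` if `μ_r ≤ s_{μ̂}`; `s_μ = (s_{μ̂} − μ_r) mod 2` if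
`s_{μ̂} < μ_r < |μ̂|`; and `s_μ = μ_r − |μ̂|` if `|μ̂| ≤ μ_r`. -/
theorem minDefects_recursion :
    (∀ n : ℕ, minDefects (fun _ : Fin 1 => n) = n) ∧
    (∀ r : ℕ, 1 ≤ r → ∀ μ : Fin (r + 1) → ℕ,
      (μ (Fin.last r) ≤ minDefects (μ ∘ Fin.castSucc) →
        minDefects μ = minDefects (μ ∘ Fin.castSucc) - μ (Fin.last r)) ∧
      (minDefects (μ ∘ Fin.castSucc) < μ (Fin.last r) →
        μ (Fin.last r) < ∑ i : Fin r, μ (Fin.castSucc i) →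
        (minDefects μ : ℤ)
          = ((minDefects (μ ∘ Fin.castSucc) : ℤ) - (μ (Fin.last r) : ℤ)) % 2) ∧
      (∑ i : Fin r, μ (Fin.castSucc i) ≤ μ (Fin.last r) →
        minDefects μ = μ (Fin.last r) - ∑ i : Fin r, μ (Fin.castSucc i))) :=
  ⟨fun n => by simpa using minDefects_of_sum_le_last (fun _ : Fin 1 => n) (by simp),
    fun _ _ μ => ⟨minDefects_of_last_le μ, minDefects_of_lt_last_of_last_lt_sum μ,
      minDefects_of_sum_le_last μ⟩⟩
end

section
/- For any composition μ = (μ_1, …, μ_r) of n, the minimal number of defects of a walk over μ equals the minimal number of defects of a walk over the reversed composition (μ_r, …, μ_1): min{ m : C^μ_m > 0 } = min{ m : C^{(μ_r, …, μ_1)}_m > 0 }. -/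
/-!
A walk over `μ` with `m` defects exists iff `m ≡ n (mod 2)`, `m ≤ n` and `2 μ_j ≤ n + m` for
every part `μ_j`. This criterion is symmetric in the parts, so the minimal number of defects is
invariant under every permutation of `μ`, reversal included.

Necessity: the prefix condition gives `t_j ≤ ∑_{i ≠ j} (μ_i - t_i)`, i.e.
`μ_j ≤ n - ∑ t = (n + m) / 2`. Sufficiency is by induction on the number of parts: a walk over
`μ` is a walk over all but the last part with some `m'` defects followed by a step
`s ≤ min μ_r m'`, and such an `m'` admissible for the shorter composition can always be found.
-/

open Finset

section Admissible

variable {ι κ : Type*} [Fintype ι] [Fintype κ]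

def AdmissibleDefects (μ : ι → ℕ) (m : ℕ) : Prop :=
  m % 2 = (∑ i, μ i) % 2 ∧ (∀ j, 2 * μ j ≤ ∑ i, μ i + m) ∧ m ≤ ∑ i, μ i

lemma admissibleDefects_comp_equiv (μ : ι → ℕ) (e : κ ≃ ι) (m : ℕ) :
    AdmissibleDefects (μ ∘ e) m ↔ AdmissibleDefects μ m := by
  simp only [AdmissibleDefects, Function.comp_apply, e.sum_comp,
    e.forall_congr_left, e.apply_symm_apply]

end Admissible

lemma isWalk_iff_Iio {r : ℕ} (μ : Fin r → ℕ) (m : ℕ) (t : Fin r → ℕ) :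
    IsWalk μ m t ↔ (∀ i, t i ≤ μ i) ∧
      (∀ j, (t j : ℤ) ≤ ∑ i ∈ Iio j, ((μ i : ℤ) - 2 * t i)) ∧
      ∑ i, ((μ i : ℤ) - 2 * t i) = m := by
  simp only [IsWalk, filter_gt_eq_Iio]

lemma IsWalk.admissibleDefects {r : ℕ} {μ : Fin r → ℕ} {m : ℕ} {t : Fin r → ℕ}
    (h : IsWalk μ m t) : AdmissibleDefects μ m := by
  obtain ⟨hle, hprefix, htotal⟩ := (isWalk_iff_Iio μ m t).1 h
  have htotal' : ((∑ i, μ i : ℕ) : ℤ) - 2 * ((∑ i, t i : ℕ) : ℤ) = m := by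
    push_cast; rw [mul_sum, ← sum_sub_distrib, htotal]
  refine ⟨by omega, fun j => ?_, by omega⟩
  set g : Fin r → ℤ := fun i => (μ i : ℤ) - t i
  have hg : ∀ i, 0 ≤ g i := fun i => by simp [g, hle i]
  have hj : (t j : ℤ) ≤ ∑ i ∈ univ.erase j, g i :=
    calc (t j : ℤ) ≤ ∑ i ∈ Iio j, ((μ i : ℤ) - 2 * t i) := hprefix j
      _ ≤ ∑ i ∈ Iio j, g i := sum_le_sum fun i _ => by simp only [g]; omega
      _ ≤ ∑ i ∈ univ.erase j, g i :=
        sum_le_sum_of_subset_of_nonneg (fun i hi => by simp [(mem_Iio.1 hi).ne])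
          fun i _ _ => hg i
  have hsplit :
      g j + ∑ i ∈ univ.erase j, g i = ((∑ i, μ i : ℕ) : ℤ) - (∑ i, t i : ℕ) := by
    rw [add_sum_erase univ g (mem_univ j)]; push_cast; exact sum_sub_distrib ..
  have hgj : g j = μ j - t j := rfl
  omega

lemma IsWalk.snoc {r : ℕ} {μ : Fin (r + 1) → ℕ} {m : ℕ} {t : Fin r → ℕ}
    (h : IsWalk (μ ∘ Fin.castSucc) m t)
    {s : ℕ} (hsμ : s ≤ μ (Fin.last r)) (hsm : s ≤ m) :
    IsWalk μ (m + μ (Fin.last r) - 2 * s) (Fin.snoc t s) := by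
  rw [isWalk_iff_Iio] at h ⊢
  obtain ⟨hle, hprefix, htotal⟩ := h
  simp only [Function.comp_apply] at hle hprefix htotal
  refine ⟨fun i => ?_, fun j => ?_, ?_⟩
  · cases i using Fin.lastCases with
    | last => simpa using hsμ
    | cast i => simpa using hle i
  · cases j using Fin.lastCases with
    | last =>
      rw [Fin.Iio_last_eq_map, sum_map]
      simpa [htotal] using hsm
    | cast j =>
      rw [Fin.Iio_castSucc, sum_map]
      simpa using hprefix j
  · rw [Fin.sum_univ_castSucc]
    simp only [Fin.snoc_castSucc, Fin.snoc_last, htotal]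
    omega

lemma exists_defects_of_prefix {n a m M : ℕ} (hpar : m % 2 = (n + a) % 2)
    (hM : 2 * M ≤ n + a + m) (hMn : M ≤ n) (ha : 2 * a ≤ n + a + m) (hm : m ≤ n + a) :
    ∃ m' s, m' % 2 = n % 2 ∧ 2 * M ≤ n + m' ∧ m' ≤ n ∧ s ≤ a ∧ s ≤ m' ∧
      m = m' + a - 2 * s :=
  let m' := max (max (m - a) (a - m)) (max (n % 2) (2 * M - n))
  ⟨m', (m' + a - m) / 2, by omega⟩

lemma exists_isWalk_of_admissibleDefects : ∀ {r : ℕ} {μ : Fin r → ℕ} {m : ℕ},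
    AdmissibleDefects μ m → ∃ t, IsWalk μ m t
  | 0, μ, m, ⟨_, _, hm⟩ => ⟨Fin.elim0, by simp_all [IsWalk]⟩
  | r + 1, μ, m, ⟨hpar, hμ, hm⟩ => by
    let μ' := μ ∘ Fin.castSucc
    have hsum : ∑ i, μ i = ∑ i, μ' i + μ (Fin.last r) := Fin.sum_univ_castSucc μ
    rw [hsum] at hpar hμ hm
    have hMn : univ.sup μ' ≤ ∑ i, μ' i :=
      Finset.sup_le fun j _ => single_le_sum (fun _ _ => Nat.zero_le _) (mem_univ j)
    have hM : univ.sup μ' ≤ (∑ i, μ' i + μ (Fin.last r) + m) / 2 :=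
      Finset.sup_le fun j _ => by have : 2 * μ' j ≤ _ := hμ j.castSucc; omega
    obtain ⟨m', s, hpar', hμ', hm', hsa, hsm', rfl⟩ :=
      exists_defects_of_prefix hpar (by omega) hMn (hμ (Fin.last r)) hm
    obtain ⟨t, ht⟩ : ∃ t, IsWalk μ' m' t := exists_isWalk_of_admissibleDefects
      ⟨hpar', fun j => le_trans (by have := le_sup (f := μ') (mem_univ j); omega) hμ', hm'⟩
    exact ⟨_, ht.snoc hsa hsm'⟩

lemma walkCount_pos_iff {r : ℕ} (μ : Fin r → ℕ) (m : ℕ) :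
    0 < walkCount μ m ↔ AdmissibleDefects μ m := by
  have : Finite {t // IsWalk μ m t} :=
    (Set.finite_Icc 0 μ).subset (fun t ht => ⟨fun _ => Nat.zero_le _, ht.1⟩) |>.to_subtype
  rw [walkCount, Nat.card_pos_iff]
  exact ⟨fun ⟨⟨⟨_, ht⟩⟩, _⟩ => ht.admissibleDefects,
    fun h => ⟨nonempty_subtype.2 (exists_isWalk_of_admissibleDefects h), this⟩⟩

theorem minDefects_comp_perm {r : ℕ} (μ : Fin r → ℕ) (σ : Equiv.Perm (Fin r)) :
    minDefects (μ ∘ σ) = minDefects μ := by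
  simp only [minDefects, walkCount_pos_iff, admissibleDefects_comp_equiv]

/-- Reversing a composition does not change the minimal number of defects of a
walk over it. -/
theorem minDefects_reverse {r : ℕ} (μ : Fin r → ℕ) :
    minDefects μ = minDefects (μ ∘ Fin.rev) :=
  (minDefects_comp_perm μ Fin.revPerm).symm
end

section
/- Fix integers ℓ ≥ 2 and p ≥ 2, and let n be a natural number with n+1 = Σ_{i=0}^r n_i·p^{(i)} its (ℓ,p)-digit expansion (n_r ≠ 0). Let J = { 0 ≤ i ≤ r−1 : n_i ≠ 0 }. Then the map S ↦ n[S] = n − 2·Σ_{i∈S} n_i·p^{(i)} is injective on subsets S ⊆ J; consequently the cardinality of supp(n) is exactly 2^{g(n)}. -/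
/-- `p^{(i)}`: `p^{(0)} = 1` and `p^{(i)} = ℓ·p^{i−1}` for `i ≥ 1`. -/
def plpow (ℓ p i : ℕ) : ℕ := if i = 0 then 1 else ℓ * p ^ (i - 1)

/-- The `i`-th `(ℓ,p)`-digit of `N`, so that `N = ∑ i, pldig ℓ p N i * plpow ℓ p i`
with `0 ≤ N_0 < ℓ` and `0 ≤ N_i < p` for `i ≥ 1`. -/
def pldig (ℓ p N i : ℕ) : ℕ := if i = 0 then N % ℓ else (N / ℓ / p ^ (i - 1)) % p

/-- `n[S] = n − 2·∑_{i ∈ S} n_i·p^{(i)}`, where `n_i` are the `(ℓ,p)`-digits of `n+1`. -/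
def nSub (ℓ p n : ℕ) (S : Finset ℕ) : ℕ :=
  n - 2 * ∑ i ∈ S, pldig ℓ p (n + 1) i * plpow ℓ p i

/-!
Each nonzero term `n_k·p^{(k)}` of the digit expansion of `n + 1` exceeds the sum of all
lower terms, which is `(n + 1) mod p^{(k)}`; hence a sum `∑_{i ∈ S} n_i·p^{(i)}` over nonzero
digit positions determines `S`. Since `n_r ≠ 0`, twice such a sum over `S ⊆ {0, …, r−1}`
stays below `n + 1`, so the truncated subtraction in `n[S]` is exact. Zero digits contribute
nothing, so `supp(n)` is the injective image of the subsets of `J`.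
-/

open Finset

section Superincreasing

variable {f : ℕ → ℕ}

theorem mem_iff_le_sum_of_superincreasing (hf : ∀ k, f k ≠ 0 → ∑ i ∈ range k, f i < f k)
    {k : ℕ} (hk : f k ≠ 0) {S : Finset ℕ} (hS : S ⊆ range (k + 1)) :
    k ∈ S ↔ f k ≤ ∑ i ∈ S, f i := by
  refine ⟨fun hkS => single_le_sum (fun _ _ => Nat.zero_le _) hkS, fun hle => ?_⟩
  by_contra hkS
  have hSk : S ⊆ range k := (subset_insert_iff_of_notMem hkS).mp (range_add_one ▸ hS)
  have := (sum_le_sum_of_subset hSk).trans_lt (hf k hk)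
  omega

theorem sum_injOn_of_superincreasing (hf : ∀ k, f k ≠ 0 → ∑ i ∈ range k, f i < f k) :
    Set.InjOn (fun S : Finset ℕ => ∑ i ∈ S, f i) {S | ∀ i ∈ S, f i ≠ 0} := by
  intro S hS T hT hST
  obtain ⟨k, hk⟩ := (S ∪ T).exists_nat_subset_range
  induction k generalizing S T with
  | zero => simp_all
  | succ k ih =>
    have hSk := subset_union_left.trans hk
    have hTk := subset_union_right.trans hk
    have hmem : k ∈ S ↔ k ∈ T := by
      by_cases hfk : f k = 0
      · exact iff_of_false (fun h => hS k h hfk) (fun h => hT k h hfk)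
      · rw [mem_iff_le_sum_of_superincreasing hf hfk hSk,
          mem_iff_le_sum_of_superincreasing hf hfk hTk]
        simp only at hST
        rw [hST]
    have herase : S.erase k = T.erase k := by
      refine ih (fun i hi => hS i (mem_of_mem_erase hi)) (fun i hi => hT i (mem_of_mem_erase hi))
        ?_ ?_
      · by_cases hkS : k ∈ S
        · have hS' := sum_erase_add S f hkS
          have hT' := sum_erase_add T f (hmem.mp hkS)
          simp only at hST ⊢
          omega
        · rw [erase_eq_of_notMem hkS, erase_eq_of_notMem (hmem.not.mp hkS)]
          exact hST
      · rw [← erase_union_distrib, ← subset_insert_iff, ← range_add_one]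
        exact hk
    ext i
    by_cases hik : i = k
    · rw [hik, hmem]
    · simpa [mem_erase, hik] using congrArg (i ∈ ·) herase

end Superincreasing

def plradix (ℓ p k : ℕ) : ℕ := if k = 0 then ℓ else p

section Digits

variable (ℓ p N : ℕ)

theorem plpow_succ (k : ℕ) : plpow ℓ p (k + 1) = plpow ℓ p k * plradix ℓ p k := by
  rcases k with _ | k <;> simp [plpow, plradix, pow_succ, mul_assoc]

theorem pldig_eq_div_plpow_mod (k : ℕ) :
    pldig ℓ p N k = N / plpow ℓ p k % plradix ℓ p k := by
  rcases k with _ | k <;> simp [pldig, plpow, plradix, Nat.div_div_eq_div_mul]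

theorem sum_range_pldig_mul_plpow (k : ℕ) :
    ∑ i ∈ range k, pldig ℓ p N i * plpow ℓ p i = N % plpow ℓ p k := by
  induction k with
  | zero => simp [plpow, Nat.mod_one]
  | succ k ih =>
    rw [sum_range_succ, ih, plpow_succ, Nat.mod_mul, pldig_eq_div_plpow_mod, mul_comm]

variable {ℓ p N}

theorem div_plpow_ne_zero_of_pldig_ne_zero {k : ℕ} (h : pldig ℓ p N k ≠ 0) :
    N / plpow ℓ p k ≠ 0 := by
  rw [pldig_eq_div_plpow_mod] at h
  rintro h0
  simp [h0] at h

theorem plpow_pos_of_pldig_ne_zero {k : ℕ} (h : pldig ℓ p N k ≠ 0) : 0 < plpow ℓ p k :=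
  Nat.pos_of_ne_zero (Nat.div_ne_zero_iff.mp (div_plpow_ne_zero_of_pldig_ne_zero h)).1

theorem pldig_mul_plpow_superincreasing (k : ℕ) (hk : pldig ℓ p N k * plpow ℓ p k ≠ 0) :
    ∑ i ∈ range k, pldig ℓ p N i * plpow ℓ p i < pldig ℓ p N k * plpow ℓ p k := by
  have hd := left_ne_zero_of_mul hk
  rw [sum_range_pldig_mul_plpow]
  calc N % plpow ℓ p k < plpow ℓ p k := Nat.mod_lt _ (plpow_pos_of_pldig_ne_zero hd)
    _ ≤ pldig ℓ p N k * plpow ℓ p k := Nat.le_mul_of_pos_left _ (Nat.pos_of_ne_zero hd)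

theorem two_mul_sum_pldig_mul_plpow_lt {r : ℕ} (hr : pldig ℓ p N r ≠ 0) {S : Finset ℕ}
    (hS : S ⊆ range r) : 2 * ∑ i ∈ S, pldig ℓ p N i * plpow ℓ p i < N := by
  have hsum : ∑ i ∈ S, pldig ℓ p N i * plpow ℓ p i ≤ N % plpow ℓ p r :=
    sum_range_pldig_mul_plpow ℓ p N r ▸ sum_le_sum_of_subset hS
  -- `N = P q + m` with `q ≥ 1` and `m < P`, so `N ≥ P + m > 2 m`
  have hq := Nat.pos_of_ne_zero (div_plpow_ne_zero_of_pldig_ne_zero hr)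
  have hm := Nat.mod_lt N (plpow_pos_of_pldig_ne_zero hr)
  have hN := Nat.div_add_mod N (plpow ℓ p r)
  have := Nat.le_mul_of_pos_right (plpow ℓ p r) hq
  omega

end Digits

theorem nSub_filter_pldig_ne_zero (ℓ p n : ℕ) (S : Finset ℕ) :
    nSub ℓ p n (S.filter fun i => pldig ℓ p (n + 1) i ≠ 0) = nSub ℓ p n S := by
  unfold nSub
  rw [sum_filter_of_ne fun i _ h => left_ne_zero_of_mul h]

theorem nSub_injOn {ℓ p n r : ℕ} (hr : pldig ℓ p (n + 1) r ≠ 0) :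
    Set.InjOn (nSub ℓ p n) ((range r).filter fun i => pldig ℓ p (n + 1) i ≠ 0).powerset := by
  intro S hS T hT hST
  rw [coe_powerset, Set.mem_preimage, Set.mem_powerset_iff, coe_subset] at hS hT
  have hSr := two_mul_sum_pldig_mul_plpow_lt hr (hS.trans (filter_subset _ _))
  have hTr := two_mul_sum_pldig_mul_plpow_lt hr (hT.trans (filter_subset _ _))
  have hsupp : ∀ U ⊆ (range r).filter fun i => pldig ℓ p (n + 1) i ≠ 0,
      ∀ i ∈ U, pldig ℓ p (n + 1) i * plpow ℓ p i ≠ 0 := fun U hU i hi => by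
    have hd := (mem_filter.mp (hU hi)).2
    exact mul_ne_zero hd (plpow_pos_of_pldig_ne_zero hd).ne'
  refine sum_injOn_of_superincreasing pldig_mul_plpow_superincreasing (hsupp S hS) (hsupp T hT) ?_
  unfold nSub at hST
  simp only
  omega

theorem nSub_injective_card_supp_general (ℓ p n r : ℕ) (hr : pldig ℓ p (n + 1) r ≠ 0) :
    Set.InjOn (fun S : Finset ℕ => nSub ℓ p n S)
      (((Finset.range r).filter (fun i => pldig ℓ p (n + 1) i ≠ 0)).powerset :
        Finset (Finset ℕ)) ∧
    ((Finset.range r).powerset.image (fun S => nSub ℓ p n S)).card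
      = 2 ^ ((((Finset.range (r + 1)).filter (fun i => pldig ℓ p (n + 1) i ≠ 0)).card) - 1) := by
  set J := (range r).filter fun i => pldig ℓ p (n + 1) i ≠ 0
  have hinj : Set.InjOn (nSub ℓ p n) J.powerset := nSub_injOn hr
  have himage : (range r).powerset.image (nSub ℓ p n) = J.powerset.image (nSub ℓ p n) := by
    refine (image_subset_image (powerset_mono.mpr (filter_subset _ _))).antisymm' ?_
    intro x hx
    obtain ⟨S, hS, rfl⟩ := mem_image.mp hx
    exact mem_image.mpr ⟨_, mem_powerset.mpr (filter_subset_filter _ (mem_powerset.mp hS)),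
      nSub_filter_pldig_ne_zero ℓ p n S⟩
  have hcard : ((range (r + 1)).filter fun i => pldig ℓ p (n + 1) i ≠ 0).card = J.card + 1 := by
    rw [range_add_one, filter_insert, if_pos hr, card_insert_of_notMem (by simp)]
  refine ⟨hinj, ?_⟩
  rw [himage, card_image_of_injOn hinj, card_powerset, hcard, Nat.add_sub_cancel]

/-- The map `S ↦ n[S]` is injective on subsets of the nonzero digit positions
of `n+1` below the top digit `r`; consequently `supp(n)` has exactly `2^{g(n)}`
elements, where `g(n)` is one less than the number of nonzero digits of `n+1`. -/
theorem nSub_injective_card_supp (ℓ p n r : ℕ) (hℓ : 2 ≤ ℓ) (hp : 2 ≤ p)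
    (hr : pldig ℓ p (n + 1) r ≠ 0)
    (htop : ∀ i, r < i → pldig ℓ p (n + 1) i = 0) :
    Set.InjOn (fun S : Finset ℕ => nSub ℓ p n S)
      (((Finset.range r).filter (fun i => pldig ℓ p (n + 1) i ≠ 0)).powerset :
        Finset (Finset ℕ)) ∧
    ((Finset.range r).powerset.image (fun S => nSub ℓ p n S)).card
      = 2 ^ ((((Finset.range (r + 1)).filter (fun i => pldig ℓ p (n + 1) i ≠ 0)).card) - 1) :=
  nSub_injective_card_supp_general ℓ p n r hr
end

section
/- In the field ℚ(δ), for natural numbers μ_1, μ_2 and 0 ≤ k ≤ min(μ_1, μ_2), with n = μ_1 + μ_2: Θ(μ_1, μ_2, n−2k) / [n−2k+1] = (−1)^{n−k} · [n−k+1 choose k]_q / ( [μ_1 choose k]_q · [μ_2 choose k]_q ). Here Θ(r,s,t) := (−1)^{i+j+m}·[i+j+m+1]!·[i]!·[j]!·[m]! / ([i+j]!·[j+m]!·[m+i]!) with i = (r+s−t)/2, j = (r−s+t)/2, m = (−r+s+t)/2. -/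
/-- The quantum numbers `[n]` in `ℚ(δ)`, with `δ = X`:
`[0] = 0`, `[1] = 1`, `[n+1] = δ·[n] − [n−1]`. -/
noncomputable def q : ℕ → RatFunc ℚ
  | 0 => 0
  | 1 => 1
  | n + 2 => RatFunc.X * q (n + 1) - q n

/-- The quantum factorial `[n]! = [n][n−1]⋯[1]`. -/
noncomputable def qfact : ℕ → RatFunc ℚ
  | 0 => 1
  | n + 1 => q (n + 1) * qfact n

/-- The quantum binomial `[n choose k]_q = [n]!/([k]!·[n−k]!)`, zero for `k > n`. -/
noncomputable def qbinom (n k : ℕ) : RatFunc ℚ :=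
  if k ≤ n then qfact n / (qfact k * qfact (n - k)) else 0

/-- The theta network value `Θ(r,s,t)` of Kauffman and Lins, with
`i = (r+s−t)/2`, `j = (r−s+t)/2`, `m = (−r+s+t)/2`:
`Θ(r,s,t) = (−1)^{i+j+m}·[i+j+m+1]!·[i]!·[j]!·[m]! / ([i+j]!·[j+m]!·[m+i]!)`. -/
noncomputable def Theta (r s t : ℕ) : RatFunc ℚ :=
  (-1 : RatFunc ℚ) ^ ((r + s - t) / 2 + (r + t - s) / 2 + (s + t - r) / 2) *
    (qfact ((r + s - t) / 2 + (r + t - s) / 2 + (s + t - r) / 2 + 1) *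
      qfact ((r + s - t) / 2) * qfact ((r + t - s) / 2) * qfact ((s + t - r) / 2)) /
    (qfact ((r + s - t) / 2 + (r + t - s) / 2) *
      qfact ((r + t - s) / 2 + (s + t - r) / 2) *
      qfact ((s + t - r) / 2 + (r + s - t) / 2))

/-!
Writing `μ₁ = k + a` and `μ₂ = k + b`, the triple `(μ₁, μ₂, a + b)` has internal labels
`(k, a, b)`, and after `[a+b+1]! = [a+b+1]·[a+b]!` both sides are the same ratio of quantum
factorials. The only input beyond field arithmetic is that no quantum number `[n+1]` vanishes in
`ℚ(δ)`: it is the rescaled Chebyshev polynomial `S_n(δ)`, and `S_n(2X) = U_n ≠ 0`.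
-/

open Polynomial

lemma q_eq_chebyshevS : ∀ n : ℕ, q n = algebraMap ℚ[X] (RatFunc ℚ) (Chebyshev.S ℚ ((n : ℤ) - 1))
  | 0 => by simp [q]
  | 1 => by simp [q]
  | n + 2 => by
    have hS : Chebyshev.S ℚ ((n + 2 : ℕ) - 1 : ℤ) =
        X * Chebyshev.S ℚ ((n + 1 : ℕ) - 1 : ℤ) - Chebyshev.S ℚ ((n : ℤ) - 1) := by
      push_cast
      rw [show (n : ℤ) + 2 - 1 = n - 1 + 2 by ring, show (n : ℤ) + 1 - 1 = n - 1 + 1 by ring,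
        Chebyshev.S_add_two]
    rw [q, q_eq_chebyshevS (n + 1), q_eq_chebyshevS n, hS, map_sub, map_mul,
      RatFunc.algebraMap_X]

lemma q_succ_ne_zero (n : ℕ) : q (n + 1) ≠ 0 := by
  rw [q_eq_chebyshevS, Nat.cast_succ, add_sub_cancel_right,
    map_ne_zero_iff _ (RatFunc.algebraMap_injective ℚ)]
  intro h
  have hU := Chebyshev.S_comp_two_mul_X ℚ n
  rw [h, zero_comp] at hU
  exact Chebyshev.U_ne_zero ℚ n (by omega) hU.symm

lemma qfact_succ (n : ℕ) : qfact (n + 1) = q (n + 1) * qfact n := rfl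

lemma qfact_ne_zero : ∀ n, qfact n ≠ 0
  | 0 => one_ne_zero
  | n + 1 => mul_ne_zero (q_succ_ne_zero n) (qfact_ne_zero n)

lemma qbinom_add_left (k a : ℕ) : qbinom (k + a) k = qfact (k + a) / (qfact k * qfact a) := by
  rw [qbinom, if_pos (Nat.le_add_right k a), Nat.add_sub_cancel_left]

lemma Theta_add_add (i j m : ℕ) :
    Theta (i + j) (i + m) (j + m) = (-1) ^ (i + j + m) *
      (qfact (i + j + m + 1) * qfact i * qfact j * qfact m) /
      (qfact (i + j) * qfact (j + m) * qfact (i + m)) := by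
  have hi : (i + j + (i + m) - (j + m)) / 2 = i := by omega
  have hj : (i + j + (j + m) - (i + m)) / 2 = j := by omega
  have hm : (i + m + (j + m) - (i + j)) / 2 = m := by omega
  rw [Theta, hi, hj, hm, add_comm m i]

/-- The Gram determinant of the cell module of the two-part Eve valenced
Temperley–Lieb algebra: for `0 ≤ k ≤ min(μ₁,μ₂)` and `n = μ₁+μ₂`,
`Θ(μ₁,μ₂,n−2k)/[n−2k+1] = (−1)^{n−k}·[n−k+1 choose k]/([μ₁ choose k]·[μ₂ choose k])`. -/
theorem theta_gram_two_part (μ₁ μ₂ k : ℕ) (h₁ : k ≤ μ₁) (h₂ : k ≤ μ₂) :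
    Theta μ₁ μ₂ (μ₁ + μ₂ - 2 * k) / q (μ₁ + μ₂ - 2 * k + 1)
      = (-1 : RatFunc ℚ) ^ (μ₁ + μ₂ - k) *
          qbinom (μ₁ + μ₂ - k + 1) k / (qbinom μ₁ k * qbinom μ₂ k) := by
  obtain ⟨a, rfl⟩ := Nat.exists_eq_add_of_le h₁
  obtain ⟨b, rfl⟩ := Nat.exists_eq_add_of_le h₂
  rw [show k + a + (k + b) - 2 * k = a + b by omega, show k + a + (k + b) - k = k + a + b by omega,
    Theta_add_add, show k + a + b + 1 = k + (a + b + 1) by ring, qbinom_add_left, qbinom_add_left,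
    qbinom_add_left, qfact_succ (a + b)]
  field_simp [qfact_ne_zero, q_succ_ne_zero]
end

section
/- Work in the field ℚ(δ). For n ≥ m ≥ 0 with m ≡ n (mod 2), let W(n,m) be the set of sequences (h_0, h_1, …, h_n) of nonnegative integers with h_0 = 0, h_n = m, and |h_j − h_{j−1}| = 1 for all 1 ≤ j ≤ n. Then Π_{(h_j) ∈ W(n,m)} Π_{j : h_j = h_{j−1} − 1} [h_{j−1}+1]/[h_{j−1}] = Π_{j=1}^{(n−m)/2} ( [m+j+1]/[j] )^{d(n, m+2j)}, where d(n,t) = binom(n, (n−t)/2) − binom(n, (n−t)/2 − 1). -/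
/-- `d(n,t) = binom(n,(n−t)/2) − binom(n,(n−t)/2−1)` (with `binom(n,−1) = 0`),
the dimension of the Temperley–Lieb cell module `Δ_n(t)`. -/
def dExp (n t : ℕ) : ℕ :=
  n.choose ((n - t) / 2) - (if (n - t) / 2 = 0 then 0 else n.choose ((n - t) / 2 - 1))

/-!
Both sides satisfy the same recursion in `n`. Splitting off the last step of a walk gives
`P(n+1, m+1) = P(n, m) · P(n, m+2) · ([m+3]/[m+2])^|W(n, m+2)|` and
`P(n+1, 0) = P(n, 1) · ([2]/[1])^|W(n, 1)|` for the product `P(n, m)` over `W(n, m)`.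
The counts `|W(n, t)|` and the ballot numbers `d(n, t)` obey the same recursion
`d(n+1, t) = d(n, t-1) + d(n, t+1)`, so they agree; with the counts as exponents, the right-hand
side satisfies the same two recursions as `P` by a telescoping product.
-/

open Finset Polynomial

noncomputable def qPoly : ℕ → ℚ[X]
  | 0 => 0
  | 1 => 1
  | n + 2 => X * qPoly (n + 1) - qPoly n

lemma q_eq_algebraMap_qPoly : ∀ n, q n = algebraMap ℚ[X] (RatFunc ℚ) (qPoly n)
  | 0 => by simp [q, qPoly]
  | 1 => by simp [q, qPoly]
  | n + 2 => by
    rw [q, qPoly, q_eq_algebraMap_qPoly (n + 1), q_eq_algebraMap_qPoly n]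
    simp [RatFunc.algebraMap_X]

-- `[n] ≠ 0` is seen at `δ = 2`, where `[n]` specialises to `n`.
lemma qPoly_eval_two : ∀ n, (qPoly n).eval 2 = n
  | 0 => by simp [qPoly]
  | 1 => by simp [qPoly]
  | n + 2 => by
    simp only [qPoly, eval_sub, eval_mul, eval_X, qPoly_eval_two (n + 1), qPoly_eval_two n]
    push_cast
    ring

lemma q_ne_zero {n : ℕ} (hn : n ≠ 0) : q n ≠ 0 := by
  rw [q_eq_algebraMap_qPoly]
  refine RatFunc.algebraMap_ne_zero fun h => hn ?_
  have h2 := qPoly_eval_two n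
  rw [h, eval_zero] at h2
  exact_mod_cast h2.symm

def walkSet (n m : ℕ) : Set (Fin (n + 1) → ℕ) :=
  {h | h 0 = 0 ∧ h (Fin.last n) = m ∧
    ∀ j : Fin n, h j.succ = h j.castSucc + 1 ∨ h j.castSucc = h j.succ + 1}

section Walks

variable {n m : ℕ}

lemma le_of_mem_walkSet {h : Fin (n + 1) → ℕ} (hh : h ∈ walkSet n m) (i : Fin (n + 1)) :
    h i ≤ i := by
  obtain ⟨h0, -, hstep⟩ := hh
  induction i using Fin.induction with
  | zero => simp [h0]
  | succ j ih =>
    simp only [Fin.val_castSucc, Fin.val_succ] at ih ⊢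
    rcases hstep j with hs | hs <;> omega

lemma walkSet_finite (n m : ℕ) : (walkSet n m).Finite :=
  (Set.finite_Icc (0 : Fin (n + 1) → ℕ) fun _ => n).subset fun _ hh =>
    ⟨fun _ => Nat.zero_le _, fun i => (le_of_mem_walkSet hh i).trans i.is_le⟩

noncomputable def walks (n m : ℕ) : Finset (Fin (n + 1) → ℕ) := (walkSet_finite n m).toFinset

lemma mem_walks {h : Fin (n + 1) → ℕ} : h ∈ walks n m ↔ h ∈ walkSet n m :=
  Set.Finite.mem_toFinset _

lemma walks_eq_empty_of_lt (hnm : n < m) : walks n m = ∅ :=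
  eq_empty_of_forall_notMem fun h hh => by
    have hlast := le_of_mem_walkSet (mem_walks.1 hh) (Fin.last n)
    rw [(mem_walks.1 hh).2.1, Fin.val_last] at hlast
    omega

lemma card_walks_zero_zero : #(walks 0 0) = 1 :=
  card_eq_one.2 ⟨0, eq_singleton_iff_unique_mem.2
    ⟨mem_walks.2 ⟨rfl, rfl, fun j => j.elim0⟩, fun h hh => funext fun i => by
      rw [Fin.fin_one_eq_zero i, (mem_walks.1 hh).1]; rfl⟩⟩

lemma snoc_mem_walkSet {g : Fin (n + 1) → ℕ} {v : ℕ} (hg : g ∈ walkSet n m)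
    (hmv : m = v + 1 ∨ v = m + 1) :
    (Fin.snoc g v : Fin (n + 2) → ℕ) ∈ walkSet (n + 1) v := by
  obtain ⟨h0, hl, hstep⟩ := hg
  refine ⟨by simpa using h0, Fin.snoc_last _ _, fun j => ?_⟩
  induction j using Fin.lastCases with
  | last => simp only [Fin.succ_last, Fin.snoc_last, Fin.snoc_castSucc, hl]; omega
  | cast i => simpa only [Fin.succ_castSucc, Fin.snoc_castSucc] using hstep i

lemma exists_init_mem_walkSet {h : Fin (n + 2) → ℕ} {v : ℕ} (hh : h ∈ walkSet (n + 1) v) :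
    ∃ u, Fin.init h ∈ walkSet n u ∧ (u = v + 1 ∨ v = u + 1) := by
  obtain ⟨h0, hl, hstep⟩ := hh
  refine ⟨h (Fin.last n).castSucc, ⟨h0, rfl, fun i => ?_⟩, ?_⟩
  · simpa only [Fin.init, Fin.succ_castSucc] using hstep i.castSucc
  · have := hstep (Fin.last n)
    rw [Fin.succ_last, hl] at this
    omega

lemma walks_succ_succ (n m : ℕ) :
    walks (n + 1) (m + 1) = (walks n m ∪ walks n (m + 2)).image (Fin.snoc · (m + 1)) := by
  ext h
  simp only [mem_image, mem_union, mem_walks]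
  constructor
  · intro hh
    obtain ⟨u, hu, huv⟩ := exists_init_mem_walkSet hh
    refine ⟨Fin.init h, ?_, by rw [← hh.2.1, Fin.snoc_init_self]⟩
    rcases huv with rfl | huv
    · exact Or.inr hu
    · exact Or.inl (Nat.succ_inj.1 huv ▸ hu)
  · rintro ⟨g, hg | hg, rfl⟩
    exacts [snoc_mem_walkSet hg (Or.inr rfl), snoc_mem_walkSet hg (Or.inl rfl)]

lemma walks_succ_zero (n : ℕ) : walks (n + 1) 0 = (walks n 1).image (Fin.snoc · 0) := by
  ext h
  simp only [mem_image, mem_walks]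
  constructor
  · intro hh
    obtain ⟨u, hu, huv⟩ := exists_init_mem_walkSet hh
    obtain rfl : u = 1 := by omega
    exact ⟨Fin.init h, hu, by rw [← hh.2.1, Fin.snoc_init_self]⟩
  · rintro ⟨g, hg, rfl⟩
    exact snoc_mem_walkSet hg (Or.inl rfl)

lemma snoc_injOn (v : ℕ) (s : Set (Fin (n + 1) → ℕ)) :
    Set.InjOn (Fin.snoc · v : (Fin (n + 1) → ℕ) → Fin (n + 2) → ℕ) s :=
  fun _ _ _ _ hgg' => (Fin.snoc_injective2 hgg').1

lemma disjoint_walks (n : ℕ) {m m' : ℕ} (hm : m ≠ m') : Disjoint (walks n m) (walks n m') :=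
  disjoint_left.2 fun _ hh hh' => hm ((mem_walks.1 hh).2.1.symm.trans (mem_walks.1 hh').2.1)

lemma card_walks_succ_succ (n m : ℕ) :
    #(walks (n + 1) (m + 1)) = #(walks n m) + #(walks n (m + 2)) := by
  rw [walks_succ_succ, card_image_of_injOn (snoc_injOn _ _),
    card_union_of_disjoint (disjoint_walks n (by omega))]

lemma card_walks_succ_zero (n : ℕ) : #(walks (n + 1) 0) = #(walks n 1) := by
  rw [walks_succ_zero, card_image_of_injOn (snoc_injOn _ _)]

end Walks

lemma dExp_self (n : ℕ) : dExp n n = 1 := by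
  simp [dExp]

lemma dExp_succ_succ {n m : ℕ} (hm : m + 2 ≤ n) (hpar : m % 2 = n % 2) :
    dExp (n + 1) (m + 1) = dExp n m + dExp n (m + 2) := by
  obtain ⟨_ | k, rfl⟩ : ∃ k, n = m + 2 * (k + 1) := ⟨(n - m) / 2 - 1, by omega⟩
  · simp [dExp]
  have e0 : (m + 2 * (k + 1 + 1) + 1 - (m + 1)) / 2 = k + 1 + 1 := by omega
  have e1 : (m + 2 * (k + 1 + 1) - m) / 2 = k + 1 + 1 := by omega
  have e2 : (m + 2 * (k + 1 + 1) - (m + 2)) / 2 = k + 1 := by omega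
  have hmono (i : ℕ) (hi : i ≤ k + 1) :
      (m + 2 * (k + 1 + 1)).choose i ≤ (m + 2 * (k + 1 + 1)).choose (i + 1) :=
    Nat.choose_le_succ_of_lt_half_left (by omega)
  have := hmono k (by omega)
  have := hmono (k + 1) le_rfl
  simp only [dExp, e0, e1, e2, Nat.add_one_ne_zero, if_false, Nat.add_sub_cancel,
    Nat.choose_succ_succ' (m + 2 * (k + 1 + 1))]
  omega

lemma dExp_succ_zero {n : ℕ} (hn : n % 2 = 1) : dExp (n + 1) 0 = dExp n 1 := by
  obtain ⟨_ | l, rfl⟩ : ∃ l, n = 2 * l + 1 := ⟨n / 2, by omega⟩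
  · rfl
  have e0 : (2 * (l + 1) + 1 + 1 - 0) / 2 = l + 1 + 1 := by omega
  have e1 : 2 * (l + 1) / 2 = l + 1 := by omega
  have hsymm := Nat.choose_symm_half (l + 1)
  have hmono := Nat.choose_le_succ_of_lt_half_left (r := l) (n := 2 * (l + 1) + 1) (by omega)
  simp only [dExp, e0, e1, Nat.add_one_ne_zero, if_false, Nat.add_sub_cancel,
    Nat.choose_succ_succ' (2 * (l + 1) + 1)]
  omega

lemma card_walks_eq_dExp {n t : ℕ} (ht : t ≤ n) (hpar : t % 2 = n % 2) :
    #(walks n t) = dExp n t := by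
  induction n generalizing t with
  | zero =>
    obtain rfl : t = 0 := by omega
    rw [card_walks_zero_zero, dExp_self]
  | succ n ih =>
    rcases t with _ | m
    · rw [card_walks_succ_zero, ih (by omega) (by omega), dExp_succ_zero (by omega)]
    rw [card_walks_succ_succ]
    rcases Nat.lt_or_ge n (m + 2) with hn | hn
    · obtain rfl : m = n := by omega
      rw [walks_eq_empty_of_lt hn, card_empty, ih le_rfl rfl, dExp_self, dExp_self]
    · rw [ih (by omega) (by omega), ih hn (by omega), dExp_succ_succ hn (by omega)]

noncomputable def downWeight {n : ℕ} (h : Fin (n + 1) → ℕ) : RatFunc ℚ :=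
  ∏ j : Fin n, if h j.castSucc = h j.succ + 1 then q (h j.castSucc + 1) / q (h j.castSucc) else 1

lemma downWeight_snoc {n : ℕ} (g : Fin (n + 1) → ℕ) (v : ℕ) :
    downWeight (Fin.snoc g v : Fin (n + 2) → ℕ) =
      downWeight g * if g (Fin.last n) = v + 1 then q (v + 2) / q (v + 1) else 1 := by
  rw [downWeight, Fin.prod_univ_castSucc]
  simp only [Fin.succ_castSucc, Fin.snoc_castSucc, Fin.succ_last, Fin.snoc_last]
  congr 1
  split_ifs with hg
  · rw [hg]
  · rfl

lemma prod_walks_succ_succ (n m : ℕ) :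
    ∏ h ∈ walks (n + 1) (m + 1), downWeight h =
      (∏ h ∈ walks n m, downWeight h) * (∏ h ∈ walks n (m + 2), downWeight h) *
        (q (m + 3) / q (m + 2)) ^ #(walks n (m + 2)) := by
  rw [walks_succ_succ, prod_image (snoc_injOn _ _),
    prod_union (disjoint_walks n (by omega)), mul_assoc, ← prod_const, ← prod_mul_distrib]
  congr 1 <;> refine prod_congr rfl fun g hg => ?_ <;> rw [downWeight_snoc]
  · rw [if_neg (by rw [(mem_walks.1 hg).2.1]; omega), mul_one]
  · rw [if_pos (mem_walks.1 hg).2.1]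

lemma prod_walks_succ_zero (n : ℕ) :
    ∏ h ∈ walks (n + 1) 0, downWeight h =
      (∏ h ∈ walks n 1, downWeight h) * (q 2 / q 1) ^ #(walks n 1) := by
  rw [walks_succ_zero, prod_image (snoc_injOn _ _), ← prod_const, ← prod_mul_distrib]
  exact prod_congr rfl fun g hg => by rw [downWeight_snoc, if_pos (mem_walks.1 hg).2.1]

lemma prod_range_pow_add_telescope {K : Type*} [Field K] (x y : ℕ → K) (e : ℕ → ℕ)
    (hx : ∀ i, x i ≠ 0) (N : ℕ) :
    (∏ j ∈ range N, (x (j + 1) / y j) ^ (e j + e (j + 1))) * (x (N + 1) / x N) ^ e N =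
      (∏ j ∈ range N, (x j / y j) ^ e j) * (∏ j ∈ range N, (x (j + 2) / y j) ^ e (j + 1)) *
        (x 1 / x 0) ^ e 0 := by
  induction N with
  | zero => simp
  | succ N ih =>
    have h1 : x (N + 1) / x N * (x N / y N) = x (N + 1) / y N := div_mul_div_cancel₀ (hx N)
    have h2 : x (N + 1) / y N * (x (N + 2) / x (N + 1)) = x (N + 2) / y N := by
      rw [mul_comm]; exact div_mul_div_cancel₀ (hx _)
    simp only [prod_range_succ]
    rw [← h2, ← h1]
    simp only [mul_pow, pow_add] at ih ⊢
    linear_combination (x N / y N) ^ e N *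
      (x (N + 1) / x N * (x N / y N) * (x (N + 2) / x (N + 1))) ^ e (N + 1) * ih

/-- The right-hand side of the formula, reindexed by `j ↦ j + 1` and with `d(n, t)` replaced by
`#(walks n t)`. These exponents vanish once `m + 2j > n`, so any large enough `N` may be used. -/
noncomputable def gramProduct (n m N : ℕ) : RatFunc ℚ :=
  ∏ j ∈ range N, (q (m + j + 2) / q (j + 1)) ^ #(walks n (m + 2 * j + 2))

lemma gramProduct_succ_succ {n N : ℕ} (m : ℕ) (hN : n < m + 2 * N + 2) :
    gramProduct (n + 1) (m + 1) N =
      gramProduct n m N * gramProduct n (m + 2) N *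
        (q (m + 3) / q (m + 2)) ^ #(walks n (m + 2)) := by
  have key := prod_range_pow_add_telescope (fun j => q (m + j + 2)) (fun j => q (j + 1))
    (fun j => #(walks n (m + 2 * j + 2))) (fun _ => q_ne_zero (by omega)) N
  rw [walks_eq_empty_of_lt hN, card_empty, pow_zero, mul_one] at key
  have hcard (j : ℕ) : #(walks (n + 1) (m + 1 + 2 * j + 2)) =
      #(walks n (m + 2 * j + 2)) + #(walks n (m + 2 * (j + 1) + 2)) := by
    rw [show m + 1 + 2 * j + 2 = m + 2 * j + 2 + 1 by ring, card_walks_succ_succ]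
    ring_nf
  unfold gramProduct
  convert key using 2
  · rw [hcard]
    ring_nf
  · congr 2 with j
    ring_nf

lemma gramProduct_succ_zero {n N : ℕ} (hN : n < 2 * N + 1) :
    gramProduct (n + 1) 0 N = gramProduct n 1 N * (q 2 / q 1) ^ #(walks n 1) := by
  have key := prod_range_pow_add_telescope (fun j => q (j + 1)) (fun j => q (j + 1))
    (fun j => #(walks n (2 * j + 1))) (fun _ => q_ne_zero (by omega)) N
  have hone (j : ℕ) : q (j + 1) / q (j + 1) = 1 := div_self (q_ne_zero j.succ_ne_zero)
  rw [walks_eq_empty_of_lt hN, card_empty, pow_zero, mul_one] at key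
  simp only [hone, one_pow, prod_const_one, one_mul] at key
  have hcard (j : ℕ) : #(walks (n + 1) (0 + 2 * j + 2)) =
      #(walks n (2 * j + 1)) + #(walks n (2 * (j + 1) + 1)) := by
    rw [show 0 + 2 * j + 2 = 2 * j + 1 + 1 by ring, card_walks_succ_succ]
    ring_nf
  unfold gramProduct
  convert key using 2
  · rw [hcard]
    ring_nf
  · congr 1 with j
    ring_nf

lemma prod_walks_eq_gramProduct {n m N : ℕ} (hN : n < m + 2 * N + 2) :
    ∏ h ∈ walks n m, downWeight h = gramProduct n m N := by
  induction n generalizing m with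
  | zero =>
    rw [prod_eq_one fun h _ => by exact Fin.prod_univ_zero _, gramProduct,
      prod_eq_one fun j _ => by rw [walks_eq_empty_of_lt (by omega), card_empty, pow_zero]]
  | succ n ih =>
    rcases m with _ | m
    · rw [prod_walks_succ_zero, ih (by omega), gramProduct_succ_zero (by omega)]
    · rw [prod_walks_succ_succ, ih (by omega), ih (by omega), gramProduct_succ_succ m (by omega)]

theorem gram_determinant_product_formula_general (n m : ℕ) (hpar : m % 2 = n % 2) :
    (∏ᶠ h ∈ { h : Fin (n + 1) → ℕ |
          h 0 = 0 ∧ h (Fin.last n) = m ∧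
          ∀ j : Fin n, h j.succ = h j.castSucc + 1 ∨ h j.castSucc = h j.succ + 1 },
        ∏ j : Fin n,
          if h j.castSucc = h j.succ + 1 then q (h j.castSucc + 1) / q (h j.castSucc)
          else 1)
      = ∏ j ∈ Finset.Icc 1 ((n - m) / 2), (q (m + j + 1) / q j) ^ dExp n (m + 2 * j) := by
  change ∏ᶠ h ∈ walkSet n m, downWeight h = _
  rw [← (walkSet_finite n m).coe_toFinset, finprod_mem_coe_finset, ← walks,
    prod_walks_eq_gramProduct (N := (n - m) / 2) (by omega), gramProduct,
    ← Ico_add_one_right_eq_Icc, prod_Ico_eq_prod_range, Nat.add_sub_cancel]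
  refine prod_congr rfl fun j hj => ?_
  rw [mem_range] at hj
  rw [card_walks_eq_dExp (by omega) (by omega)]
  ring_nf

/-- Product-over-walks formula for the Gram determinant of `Δ_n(m)`: the product
over all nonnegative walks `(h_0,…,h_n)` from `0` to `m` of the factors
`[h_{j−1}+1]/[h_{j−1}]` over down-steps `j` equals
`∏_{j=1}^{(n−m)/2} ([m+j+1]/[j])^{d(n,m+2j)}`. -/
theorem gram_determinant_product_formula (n m : ℕ) (hm : m ≤ n) (hpar : m % 2 = n % 2) :
    (∏ᶠ h ∈ { h : Fin (n + 1) → ℕ |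
          h 0 = 0 ∧ h (Fin.last n) = m ∧
          ∀ j : Fin n, h j.succ = h j.castSucc + 1 ∨ h j.castSucc = h j.succ + 1 },
        ∏ j : Fin n,
          if h j.castSucc = h j.succ + 1 then q (h j.castSucc + 1) / q (h j.castSucc)
          else 1)
      = ∏ j ∈ Finset.Icc 1 ((n - m) / 2), (q (m + j + 1) / q j) ^ dExp n (m + 2 * j) :=
  gram_determinant_product_formula_general n m hpar
end
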